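/- With the recursion coefficients B_{i,(α,β,w),(s,t,u)} = δ_{w,u} δ_{si} δ_{αs} δ_{βt} b_i and C_{i,(α,w),(s,t,u)} = δ_{w,u} δ_{si} δ_{αt} (1 + δ_{ti} c_i) arising from the free product of one-dimensional free Meixner states with parameters (b_i, c_i), c_i > -1, the hypotheses of the Favard-type theorem hold: C_{i,s,u} = 0 unless u = (i,s) with C_{i,s,(i,s)} = 1 + δ_{s(1),i} c_i > 0, and the symmetry condition B_{i,s,u} ∏_j C_{s(j),s_{j+1},s_j} = B_{i,u,s} ∏_j C_{u(j),u_{j+1},u_j} is satisfied; consequently, the free product polynomials form an orthogonal family with respect to a faithful state. -/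

import Mathlib

/-- The monomial `x_{u(1)} ⋯ x_{u(k)}` in the free algebra `ℝ⟨x₁,…,xₙ⟩`. -/
noncomputable def mono {n : ℕ} (u : List (Fin n)) : FreeAlgebra ℝ (Fin n) :=
  (u.map (FreeAlgebra.ι ℝ)).prod

/-- The span of monomials of length (degree) `< k`: "lower-order terms". -/
noncomputable def lowerOrder (n k : ℕ) : Submodule ℝ (FreeAlgebra ℝ (Fin n)) :=
  Submodule.span ℝ {m | ∃ v : List (Fin n), v.length < k ∧ m = mono v}

/-- The monomial-reversing involution `*` on `ℝ⟨x₁,…,xₙ⟩`. -/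
noncomputable def ncStar {n : ℕ} (P : FreeAlgebra ℝ (Fin n)) : FreeAlgebra ℝ (Fin n) :=
  MulOpposite.unop
    (FreeAlgebra.lift ℝ (fun i => MulOpposite.op (FreeAlgebra.ι ℝ i)) P)

/-- A monic polynomial family: `P_∅ = 1` and `P_u = x_u + lower-order terms`. -/
def IsMonicFamily {n : ℕ} (P : List (Fin n) → FreeAlgebra ℝ (Fin n)) : Prop :=
  P [] = 1 ∧ ∀ u : List (Fin n), P u - mono u ∈ lowerOrder n u.length

/-- `∏_{j=1}^{k} C_{u(j), u_{j+1}, u_j}` over the suffixes `u_j = (u(j),…,u(k))` of `u`. -/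
def suffixProd {n : ℕ} (C : Fin n → List (Fin n) → List (Fin n) → ℝ) :
    List (Fin n) → ℝ
  | [] => 1
  | (a :: t) => C a t (a :: t) * suffixProd C t

/-- The recursion coefficients `B_{i,(α,β,w),(s,t,u)} = δ_{w,u}δ_{si}δ_{αs}δ_{βt} b_i`
of the free product of one-dimensional free Meixner states. -/
def freeProdB {n : ℕ} (b : Fin n → ℝ) (i : Fin n) (w u : List (Fin n)) : ℝ :=
  if w = u ∧ u.head? = some i then b i else 0

/-- The recursion coefficients `C_{i,(α,w),(s,t,u)} = δ_{w,u}δ_{si}δ_{αt}(1 + δ_{ti}c_i)`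
of the free product of one-dimensional free Meixner states. -/
def freeProdC {n : ℕ} (c : Fin n → ℝ) (i : Fin n) (v u : List (Fin n)) : ℝ :=
  if u = i :: v then 1 + (if v.head? = some i then c i else 0) else 0

namespace FPM
variable {n : ℕ}

lemma ncStar_add (a b : FreeAlgebra ℝ (Fin n)) : ncStar (a + b) = ncStar a + ncStar b := by
  simp [ncStar, map_add]

lemma ncStar_mul (a b : FreeAlgebra ℝ (Fin n)) : ncStar (a * b) = ncStar b * ncStar a := by
  simp [ncStar, map_mul]

lemma ncStar_algebraMap (r : ℝ) :
    ncStar (algebraMap ℝ (FreeAlgebra ℝ (Fin n)) r) = algebraMap ℝ (FreeAlgebra ℝ (Fin n)) r := by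
  simp [ncStar]

lemma ncStar_ι (i : Fin n) : ncStar (FreeAlgebra.ι ℝ i) = FreeAlgebra.ι ℝ i := by
  simp [ncStar]

lemma W_cons (c : Fin n → ℝ) (a : Fin n) (t : List (Fin n)) :
    suffixProd (freeProdC c) (a :: t)
      = (1 + if t.head? = some a then c a else 0) * suffixProd (freeProdC c) t := by
  simp [suffixProd, freeProdC]

lemma W_pos (c : Fin n → ℝ) (hc : ∀ i, -1 < c i) :
    ∀ u : List (Fin n), 0 < suffixProd (freeProdC c) u
  | [] => one_pos
  | (a :: t) => by
      rw [W_cons]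
      have ht := W_pos c hc t
      have h1 : (0:ℝ) < 1 + if t.head? = some a then c a else 0 := by
        split_ifs with h
        · linarith [hc a]
        · norm_num
      positivity

lemma ne_of_length_ne {α : Type*} {l l' : List α} (h : l.length ≠ l'.length) : l ≠ l' :=
  fun e => h (by rw [e])

/-- `L_i` applied to the basis vector `δ_u`. -/
noncomputable def vecL (b c : Fin n → ℝ) (i : Fin n) (u : List (Fin n)) : List (Fin n) →₀ ℝ :=
  Finsupp.single (i :: u) 1
    + (if u.head? = some i then b i else 0) • Finsupp.single u 1
    + (if u.head? = some i then 1 + (if u.tail.head? = some i then c i else 0) else 0)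
        • Finsupp.single u.tail 1

noncomputable def Lop (b c : Fin n → ℝ) (i : Fin n) :
    (List (Fin n) →₀ ℝ) →ₗ[ℝ] (List (Fin n) →₀ ℝ) :=
  Finsupp.lsum ℝ (fun u => LinearMap.toSpanSingleton ℝ _ (vecL b c i u))

lemma Lop_single (b c : Fin n → ℝ) (i : Fin n) (u : List (Fin n)) (r : ℝ) :
    Lop b c i (Finsupp.single u r) = r • vecL b c i u := by
  simp [Lop, Finsupp.lsum_single, LinearMap.toSpanSingleton_apply]

/-- the weighted bilinear form -/
noncomputable def Bform (c : Fin n → ℝ) :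
    (List (Fin n) →₀ ℝ) →ₗ[ℝ] (List (Fin n) →₀ ℝ) →ₗ[ℝ] ℝ :=
  Finsupp.lsum ℝ (fun u => LinearMap.toSpanSingleton ℝ _
    (suffixProd (freeProdC c) u • Finsupp.lapply u))

lemma Bform_single (c : Fin n → ℝ) (u : List (Fin n)) (r : ℝ) (g : List (Fin n) →₀ ℝ) :
    Bform c (Finsupp.single u r) g = r * (suffixProd (freeProdC c) u * g u) := by
  simp [Bform, Finsupp.lsum_single, LinearMap.toSpanSingleton_apply, mul_assoc]

lemma Bform_apply (c : Fin n → ℝ) (f g : List (Fin n) →₀ ℝ) :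
    Bform c f g = ∑ u ∈ f.support, f u * (suffixProd (freeProdC c) u * g u) := by
  rw [Bform, Finsupp.lsum_apply, Finsupp.sum, LinearMap.sum_apply]
  simp [LinearMap.toSpanSingleton_apply, mul_assoc]

lemma scalar_key (b c : Fin n → ℝ) (i : Fin n) (u v : List (Fin n)) :
    suffixProd (freeProdC c) (i :: u) * (if v = i :: u then (1:ℝ) else 0)
      + (if u.head? = some i then b i else 0)
          * (suffixProd (freeProdC c) u * (if v = u then (1:ℝ) else 0))
      + (if u.head? = some i then 1 + (if u.tail.head? = some i then c i else 0) else 0)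
          * (suffixProd (freeProdC c) u.tail * (if v = u.tail then (1:ℝ) else 0))
    = suffixProd (freeProdC c) u *
        ((if i :: v = u then (1:ℝ) else 0)
          + (if v.head? = some i then b i else 0) * (if v = u then (1:ℝ) else 0)
          + (if v.head? = some i then 1 + (if v.tail.head? = some i then c i else 0) else 0)
              * (if v.tail = u then (1:ℝ) else 0)) := by
  rcases u with _ | ⟨a, t⟩ <;> rcases v with _ | ⟨d, w⟩
  · simp
  · by_cases hd : d = i
    · subst hd
      by_cases hw : w = []
      · subst hw; simp [W_cons]
      · simp [hw, Ne.symm hw, W_cons]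
    · simp [hd, fun h : (d :: w) = i :: ([]:List (Fin n)) => hd (by injection h)]
  · by_cases ha : a = i
    · subst ha
      by_cases ht : t = []
      · subst ht; simp [W_cons]
      · simp [ht, Ne.symm ht, W_cons]
    · have : (a :: t : List (Fin n)) ≠ i :: [] := by
        intro h; injection h with h1 _; exact ha h1
      simp [ha, Ne.symm ha, this, Ne.symm this]
  · simp only [List.head?_cons, List.tail_cons, Option.some_inj]
    by_cases h1 : d = i ∧ w = a :: t
    · obtain ⟨rfl, rfl⟩ := h1
      have L1 : (d :: a :: t : List (Fin n)) ≠ a :: t := ne_of_length_ne (by simp)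
      have L2 : (d :: a :: t : List (Fin n)) ≠ t := ne_of_length_ne (by simp; omega)
      have L3 : (a :: t : List (Fin n)) ≠ d :: d :: a :: t := ne_of_length_ne (by simp)
      have L4 : (a :: t : List (Fin n)) ≠ d :: a :: t := ne_of_length_ne (by simp)
      rw [W_cons c d (a :: t)]
      simp [L1, L2, L3, L4, Ne.symm L1, Ne.symm L2, Ne.symm L3, Ne.symm L4]
      try ring_nf
    · by_cases h3 : a = i ∧ t = d :: w
      · obtain ⟨rfl, rfl⟩ := h3
        have L1 : (d :: w : List (Fin n)) ≠ a :: a :: d :: w := ne_of_length_ne (by simp)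
        have L2 : (d :: w : List (Fin n)) ≠ a :: d :: w := ne_of_length_ne (by simp)
        have L3 : (a :: d :: w : List (Fin n)) ≠ d :: w := ne_of_length_ne (by simp)
        have L4 : (a :: d :: w : List (Fin n)) ≠ w := ne_of_length_ne (by simp; omega)
        have L5 : (w : List (Fin n)) ≠ a :: d :: w := ne_of_length_ne (by simp; omega)
        rw [W_cons c a (d :: w)]
        simp [L1, L2, L3, L4, L5, Ne.symm L1, Ne.symm L2, Ne.symm L3, Ne.symm L4, Ne.symm L5]
        try ring_nf
      · by_cases h2 : d = a ∧ w = t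
        · obtain ⟨rfl, rfl⟩ := h2
          have L1 : (d :: w : List (Fin n)) ≠ i :: d :: w := ne_of_length_ne (by simp)
          have L2 : (d :: w : List (Fin n)) ≠ w := ne_of_length_ne (by simp)
          simp [L1, L2, Ne.symm L1, Ne.symm L2]
          try ring_nf
        · have c1 : (d :: w : List (Fin n)) ≠ i :: a :: t := by
            simpa [List.cons.injEq] using h1
          have c2 : (d :: w : List (Fin n)) ≠ a :: t := by
            simpa [List.cons.injEq] using h2
          have c5 : (a :: t : List (Fin n)) ≠ i :: d :: w := by
            simpa [List.cons.injEq] using h3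
          have h2' : ¬(a = d ∧ t = w) := fun e => h2 ⟨e.1.symm, e.2.symm⟩
          by_cases ha : a = i <;> by_cases hd : d = i
          · have c3 : (d :: w : List (Fin n)) ≠ t := fun e => h3 ⟨ha, e.symm⟩
            have c4 : (a :: t : List (Fin n)) ≠ w := fun e => h1 ⟨hd, e.symm⟩
            simp [c1, c2, c3, c4, c5, h2', Ne.symm c1, Ne.symm c2, Ne.symm c3, Ne.symm c4, Ne.symm c5]
          · have c3 : (d :: w : List (Fin n)) ≠ t := fun e => h3 ⟨ha, e.symm⟩
            simp [c1, c2, c3, c5, hd, h2', Ne.symm c1, Ne.symm c2, Ne.symm c3, Ne.symm c5, Ne.symm hd]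
          · have c4 : (a :: t : List (Fin n)) ≠ w := fun e => h1 ⟨hd, e.symm⟩
            simp [c1, c2, c4, c5, ha, h2', Ne.symm c1, Ne.symm c2, Ne.symm c4, Ne.symm c5, Ne.symm ha]
          · simp [c1, c2, ha, hd, h2', Ne.symm c1, Ne.symm c2, Ne.symm ha, Ne.symm hd]

lemma Bform_vecL (b c : Fin n → ℝ) (i : Fin n) (u v : List (Fin n)) :
    Bform c (vecL b c i u) (Finsupp.single v 1)
      = suffixProd (freeProdC c) u * (vecL b c i v) u := by
  simp only [vecL, map_add, LinearMap.map_smul, LinearMap.add_apply, LinearMap.smul_apply,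
    Bform_single, Finsupp.add_apply, Finsupp.smul_apply, Finsupp.single_apply, smul_eq_mul,
    one_mul, mul_one]
  exact scalar_key b c i u v

lemma Lop_adj (b c : Fin n → ℝ) (i : Fin n) (f g : List (Fin n) →₀ ℝ) :
    Bform c (Lop b c i f) g = Bform c f (Lop b c i g) := by
  induction f using Finsupp.induction_linear with
  | zero => simp
  | add f1 f2 ih1 ih2 => simp only [map_add, LinearMap.add_apply, ih1, ih2]
  | single u r =>
    induction g using Finsupp.induction_linear with
    | zero => simp
    | add g1 g2 ih1 ih2 => simp only [map_add, ih1, ih2]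
    | single v s =>
      have hv : Finsupp.single v s = s • Finsupp.single v (1:ℝ) := by
        rw [Finsupp.smul_single, smul_eq_mul, mul_one]
      rw [Lop_single, Lop_single, map_smul, LinearMap.smul_apply, hv,
        (Bform c _).map_smul, Bform_vecL, Bform_single]
      simp only [Finsupp.smul_apply, smul_eq_mul]
      ring

end FPM

namespace FPM
variable {n : ℕ}

noncomputable def rho (b c : Fin n → ℝ) :
    FreeAlgebra ℝ (Fin n) →ₐ[ℝ] Module.End ℝ (List (Fin n) →₀ ℝ) :=
  FreeAlgebra.lift ℝ (fun i => Lop b c i)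

noncomputable def Emap (b c : Fin n → ℝ) :
    FreeAlgebra ℝ (Fin n) →ₗ[ℝ] (List (Fin n) →₀ ℝ) :=
  (LinearMap.applyₗ (Finsupp.single ([] : List (Fin n)) (1:ℝ))).comp (rho b c).toLinearMap

lemma Emap_apply (b c : Fin n → ℝ) (A : FreeAlgebra ℝ (Fin n)) :
    Emap b c A = rho b c A (Finsupp.single [] 1) := rfl

lemma rho_adj (b c : Fin n → ℝ) (A : FreeAlgebra ℝ (Fin n)) :
    ∀ f g, Bform c (rho b c A f) g = Bform c f (rho b c (ncStar A) g) := by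
  induction A using FreeAlgebra.induction with
  | grade0 r =>
    intro f g
    rw [ncStar_algebraMap]
    simp only [AlgHom.commutes, Module.algebraMap_end_apply, map_smul,
      LinearMap.smul_apply, (Bform c f).map_smul]
  | grade1 i =>
    intro f g
    rw [ncStar_ι]
    have h1 : rho b c (FreeAlgebra.ι ℝ i) = Lop b c i := FreeAlgebra.lift_ι_apply _ _
    rw [h1]
    exact Lop_adj b c i f g
  | mul x y hx hy =>
    intro f g
    rw [ncStar_mul, map_mul, map_mul]
    have e1 : (rho b c x * rho b c y) f = rho b c x (rho b c y f) := rfl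
    have e2 : (rho b c (ncStar y) * rho b c (ncStar x)) g
        = rho b c (ncStar y) (rho b c (ncStar x) g) := rfl
    rw [e1, e2, hx, hy]
  | add x y hx hy =>
    intro f g
    simp only [ncStar_add, map_add, LinearMap.add_apply]
    simp only [hx, hy, map_add, LinearMap.add_apply]
end FPM

namespace FPM
variable {n : ℕ}

lemma rec_clean (b c : Fin n → ℝ) (P : List (Fin n) → FreeAlgebra ℝ (Fin n))
    (hrec : ∀ (i : Fin n) (u : List (Fin n)),
      FreeAlgebra.ι ℝ i * P u
        = P (i :: u)
          + (∑ w : List.Vector (Fin n) u.length,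
              freeProdB b i w.toList u • P w.toList)
          + (∑ v : List.Vector (Fin n) (u.length - 1),
              freeProdC c i v.toList u • P v.toList))
    (i : Fin n) (u : List (Fin n)) :
    FreeAlgebra.ι ℝ i * P u
      = P (i :: u)
        + (if u.head? = some i then b i else 0) • P u
        + (if u.head? = some i then 1 + (if u.tail.head? = some i then c i else 0) else 0)
            • P u.tail := by
  rw [hrec i u]
  have hB : (∑ w : List.Vector (Fin n) u.length, freeProdB b i w.toList u • P w.toList)
      = (if u.head? = some i then b i else 0) • P u := by
    have h1 : ∀ w : List.Vector (Fin n) u.length, w ∈ Finset.univ →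
        w ≠ ⟨u, rfl⟩ → freeProdB b i w.toList u • P w.toList = 0 := by
      intro w _ hw
      have hne : w.toList ≠ u := fun e => hw (Subtype.ext e)
      simp [freeProdB, hne]
    refine (Finset.sum_eq_single _ h1 (fun h => absurd (Finset.mem_univ _) h)).trans ?_
    by_cases h : u.head? = some i <;> simp [freeProdB, h, List.Vector.toList]
  have hC : (∑ v : List.Vector (Fin n) (u.length - 1), freeProdC c i v.toList u • P v.toList)
      = (if u.head? = some i then 1 + (if u.tail.head? = some i then c i else 0) else 0)
          • P u.tail := by
    rcases u with _ | ⟨a, t⟩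
    · simp [freeProdC]
    · have h1 : ∀ v : List.Vector (Fin n) ((a :: t).length - 1), v ∈ Finset.univ →
          v ≠ ⟨t, by simp⟩ → freeProdC c i v.toList (a :: t) • P v.toList = 0 := by
        intro v _ hv
        have hne : (a :: t : List (Fin n)) ≠ i :: v.toList := by
          intro e
          injection e with e1 e2
          exact hv (Subtype.ext e2.symm)
        simp [freeProdC, hne]
      refine (Finset.sum_eq_single _ h1 (fun h => absurd (Finset.mem_univ _) h)).trans ?_
      by_cases h : a = i
      · subst h; simp [freeProdC, List.Vector.toList]; split_ifs <;> rfl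
      · have hne2 : (a :: t : List (Fin n)) ≠ i :: t := by
          intro e; injection e with e1 _; exact h e1
        simp [freeProdC, h, hne2, List.Vector.toList]
  rw [hB, hC]

lemma Emap_mul_ι (b c : Fin n → ℝ) (i : Fin n) (A : FreeAlgebra ℝ (Fin n)) :
    Emap b c (FreeAlgebra.ι ℝ i * A) = Lop b c i (Emap b c A) := by
  rw [Emap_apply, Emap_apply, map_mul]
  have : rho b c (FreeAlgebra.ι ℝ i) = Lop b c i := FreeAlgebra.lift_ι_apply _ _
  rw [← this]
  rfl

lemma Emap_P (b c : Fin n → ℝ) (P : List (Fin n) → FreeAlgebra ℝ (Fin n))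
    (hP : IsMonicFamily P)
    (hrec : ∀ (i : Fin n) (u : List (Fin n)),
      FreeAlgebra.ι ℝ i * P u
        = P (i :: u)
          + (∑ w : List.Vector (Fin n) u.length,
              freeProdB b i w.toList u • P w.toList)
          + (∑ v : List.Vector (Fin n) (u.length - 1),
              freeProdC c i v.toList u • P v.toList)) :
    ∀ u, Emap b c (P u) = Finsupp.single u 1 := by
  suffices H : ∀ (k : ℕ) (u : List (Fin n)), u.length ≤ k →
      Emap b c (P u) = Finsupp.single u 1 from fun u => H u.length u le_rfl
  intro k
  induction k with
  | zero =>
    intro u hu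
    have : u = [] := List.length_eq_zero_iff.mp (Nat.le_zero.mp hu)
    subst this
    rw [hP.1, Emap_apply, map_one]
    rfl
  | succ k ih =>
    intro u hu
    rcases u with _ | ⟨i, t⟩
    · rw [hP.1, Emap_apply, map_one]; rfl
    · have ht : t.length ≤ k := by simpa using hu
      have htt : t.tail.length ≤ k := le_trans (by simp [List.length_tail]) ht
      have e2 : P (i :: t) = FreeAlgebra.ι ℝ i * P t
          - (if t.head? = some i then b i else 0) • P t
          - (if t.head? = some i then 1 + (if t.tail.head? = some i then c i else 0) else 0)
              • P t.tail := by
        rw [rec_clean b c P hrec i t]; abel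
      rw [e2, map_sub, map_sub, map_smul, map_smul, Emap_mul_ι, ih t ht, ih t.tail htt,
        Lop_single, one_smul, vecL]
      abel

lemma mono_nil : (mono [] : FreeAlgebra ℝ (Fin n)) = 1 := rfl

lemma mono_append (u v : List (Fin n)) : mono (u ++ v) = mono u * mono v := by
  simp [mono]

lemma mono_mem (P : List (Fin n) → FreeAlgebra ℝ (Fin n)) (hP : IsMonicFamily P) :
    ∀ u, mono u ∈ Submodule.span ℝ (Set.range P) := by
  suffices H : ∀ (k : ℕ) (u : List (Fin n)), u.length < k →
      mono u ∈ Submodule.span ℝ (Set.range P) from fun u => H (u.length + 1) u (Nat.lt_succ_self _)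
  intro k
  induction k with
  | zero => intro u hu; omega
  | succ k ih =>
    intro u hu
    have h1 : P u ∈ Submodule.span ℝ (Set.range P) := Submodule.subset_span ⟨u, rfl⟩
    have h3 : lowerOrder n u.length ≤ Submodule.span ℝ (Set.range P) := by
      rw [lowerOrder]
      apply Submodule.span_le.mpr
      rintro m ⟨v, hv, rfl⟩
      exact ih v (lt_of_lt_of_le hv (Nat.lt_succ_iff.mp hu))
    have h4 : mono u = P u - (P u - mono u) := by abel
    rw [h4]
    exact Submodule.sub_mem _ h1 (h3 (hP.2 u))

lemma mono_span : ∀ A : FreeAlgebra ℝ (Fin n),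
    A ∈ Submodule.span ℝ (Set.range (mono : List (Fin n) → FreeAlgebra ℝ (Fin n))) := by
  intro A
  induction A using FreeAlgebra.induction with
  | grade0 r =>
    have : algebraMap ℝ (FreeAlgebra ℝ (Fin n)) r = r • mono ([] : List (Fin n)) := by
      simp [mono, Algebra.algebraMap_eq_smul_one]
    rw [this]
    exact Submodule.smul_mem _ _ (Submodule.subset_span ⟨[], rfl⟩)
  | grade1 i =>
    have : FreeAlgebra.ι ℝ i = mono [i] := by simp [mono]
    rw [this]
    exact Submodule.subset_span ⟨[i], rfl⟩
  | add x y hx hy => exact Submodule.add_mem _ hx hy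
  | mul x y hx hy =>
    have hmul : x * y ∈ Submodule.span ℝ (Set.range mono) * Submodule.span ℝ (Set.range mono) :=
      Submodule.mul_mem_mul hx hy
    rw [Submodule.span_mul_span] at hmul
    refine Submodule.span_le.mpr ?_ hmul
    rintro m hm
    rw [Set.mem_mul] at hm
    obtain ⟨p, hp, q, hq, rfl⟩ := hm
    obtain ⟨up, rfl⟩ := hp
    obtain ⟨uq, rfl⟩ := hq
    rw [← mono_append]
    exact Submodule.subset_span ⟨up ++ uq, rfl⟩

end FPM


/-- the coefficients `B`, `C` of the free product of one-dimensional free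
Meixner states with parameters `(bᵢ, cᵢ)`, `cᵢ > -1`, satisfy the hypotheses of the
Favard-type theorem: `C_{i,s,u} = 0` unless `u = (i,s)`, `C_{i,s,(i,s)} = 1 + δ_{s(1),i}cᵢ > 0`,
and the symmetry condition for `B`; consequently any monic family satisfying the
corresponding recursion is orthogonal with respect to a faithful state. -/
theorem free_product_meixner_favard (n : ℕ) (b c : Fin n → ℝ)
    (hc : ∀ i : Fin n, -1 < c i) :
    (∀ (i : Fin n) (s u : List (Fin n)), u ≠ i :: s → freeProdC c i s u = 0)
    ∧ (∀ (i : Fin n) (s : List (Fin n)),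
        freeProdC c i s (i :: s)
          = 1 + (if s.head? = some i then c i else 0)
        ∧ 0 < freeProdC c i s (i :: s))
    ∧ (∀ (i : Fin n) (s u : List (Fin n)), s.length = u.length →
        freeProdB b i s u * suffixProd (freeProdC c) s
          = freeProdB b i u s * suffixProd (freeProdC c) u)
    ∧ (∀ P : List (Fin n) → FreeAlgebra ℝ (Fin n), IsMonicFamily P →
        (∀ (i : Fin n) (u : List (Fin n)),
          FreeAlgebra.ι ℝ i * P u
            = P (i :: u)
              + (∑ w : List.Vector (Fin n) u.length,
                  freeProdB b i w.toList u • P w.toList)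
              + (∑ v : List.Vector (Fin n) (u.length - 1),
                  freeProdC c i v.toList u • P v.toList)) →
        ∃ φ : FreeAlgebra ℝ (Fin n) →ₗ[ℝ] ℝ,
          φ 1 = 1
          ∧ (∀ A : FreeAlgebra ℝ (Fin n), 0 ≤ φ (ncStar A * A))
          ∧ (∀ A : FreeAlgebra ℝ (Fin n), φ (ncStar A * A) = 0 → A = 0)
          ∧ (∀ u v : List (Fin n), u ≠ v → φ (ncStar (P u) * P v) = 0)) := by
  refine ⟨?_, ?_, ?_, ?_⟩
  · intro i s u h
    rw [freeProdC, if_neg h]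
  · intro i s
    constructor
    · simp [freeProdC]
    · have h1 : freeProdC c i s (i :: s) = 1 + (if s.head? = some i then c i else 0) := by
        simp [freeProdC]
      rw [h1]
      split_ifs with h
      · linarith [hc i]
      · norm_num
  · intro i s u _
    by_cases h : s = u
    · subst h; rfl
    · have h' : ¬ u = s := fun e => h e.symm
      simp [freeProdB, h, h']
  · intro P hP hrec
    set φ : FreeAlgebra ℝ (Fin n) →ₗ[ℝ] ℝ :=
      (Finsupp.lapply ([] : List (Fin n))).comp (FPM.Emap b c) with hφ
    have hδ : ∀ g : List (Fin n) →₀ ℝ, FPM.Bform c (Finsupp.single [] 1) g = g [] := by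
      intro g
      rw [FPM.Bform_single]
      simp [suffixProd]
    have hinner : ∀ A B' : FreeAlgebra ℝ (Fin n),
        φ (ncStar A * B') = FPM.Bform c (FPM.Emap b c A) (FPM.Emap b c B') := by
      intro A B'
      have e1 : φ (ncStar A * B')
          = (FPM.rho b c (ncStar A) (FPM.Emap b c B')) [] := by
        simp only [hφ, LinearMap.comp_apply, Finsupp.lapply_apply, FPM.Emap_apply, map_mul]
        rfl
      rw [e1, ← hδ (FPM.rho b c (ncStar A) (FPM.Emap b c B')),
        ← FPM.rho_adj b c A (Finsupp.single [] 1) (FPM.Emap b c B'), ← FPM.Emap_apply]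
    have hEP : ∀ u, FPM.Emap b c (P u) = Finsupp.single u 1 := FPM.Emap_P b c P hP hrec
    have hinj : ∀ A : FreeAlgebra ℝ (Fin n), FPM.Emap b c A = 0 → A = 0 := by
      intro A hA0
      have hA : A ∈ Submodule.span ℝ (Set.range P) := by
        have h1 := FPM.mono_span A
        have h2 : Submodule.span ℝ (Set.range (mono : List (Fin n) → FreeAlgebra ℝ (Fin n)))
            ≤ Submodule.span ℝ (Set.range P) := by
          apply Submodule.span_le.mpr
          rintro m ⟨u, rfl⟩
          exact FPM.mono_mem P hP u
        exact h2 h1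
      obtain ⟨co, hco⟩ := Finsupp.mem_span_range_iff_exists_finsupp.mp hA
      have hE : FPM.Emap b c A = co := by
        rw [← hco, map_finsuppSum]
        have : ∀ u ∈ co.support, FPM.Emap b c (co u • P u) = Finsupp.single u (co u) := by
          intro u _
          rw [map_smul, hEP u, Finsupp.smul_single, smul_eq_mul, mul_one]
        rw [Finsupp.sum_congr this]
        exact Finsupp.sum_single co
      rw [hA0] at hE
      rw [← hco, ← hE]
      simp
    refine ⟨φ, ?_, ?_, ?_, ?_⟩
    · simp [hφ, FPM.Emap_apply, map_one, Module.End.one_apply]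
    · intro A
      rw [hinner, FPM.Bform_apply]
      apply Finset.sum_nonneg
      intro u _
      have hW := FPM.W_pos c hc u
      have : FPM.Emap b c A u * (suffixProd (freeProdC c) u * FPM.Emap b c A u)
          = suffixProd (freeProdC c) u * (FPM.Emap b c A u) ^ 2 := by ring
      rw [this]
      exact mul_nonneg hW.le (sq_nonneg _)
    · intro A hA
      rw [hinner, FPM.Bform_apply] at hA
      have hnn : ∀ u ∈ (FPM.Emap b c A).support,
          0 ≤ FPM.Emap b c A u * (suffixProd (freeProdC c) u * FPM.Emap b c A u) := by
        intro u _
        have hW := FPM.W_pos c hc u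
        nlinarith [sq_nonneg (FPM.Emap b c A u)]
      have hz := (Finset.sum_eq_zero_iff_of_nonneg hnn).mp hA
      apply hinj
      ext u
      by_cases hu : u ∈ (FPM.Emap b c A).support
      · have := hz u hu
        have hW := FPM.W_pos c hc u
        have h2 : FPM.Emap b c A u = 0 := by
          by_contra hne
          have hp : 0 < suffixProd (freeProdC c) u
              * (FPM.Emap b c A u * FPM.Emap b c A u) :=
            mul_pos hW (mul_self_pos.mpr hne)
          have e : FPM.Emap b c A u * (suffixProd (freeProdC c) u * FPM.Emap b c A u)
              = suffixProd (freeProdC c) u * (FPM.Emap b c A u * FPM.Emap b c A u) := by ring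
          rw [e] at this
          exact absurd this hp.ne'
        simpa using h2
      · simpa using Finsupp.notMem_support_iff.mp hu
    · intro u v huv
      rw [hinner, hEP u, hEP v, FPM.Bform_single, Finsupp.single_apply,
        if_neg (fun e : v = u => huv e.symm)]
      ring
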